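/- Under Schrödinger evolution P(t) = e^{−iHt} P₀ e^{iHt}, if T_θ ≥ 0 is a time at which arcsin(‖P₀ − P(T_θ)‖) = θ for some θ ∈ (0, π/2], then T_θ ≥ θ / ‖P₀ H P₀^⊥‖ (in particular ‖P₀ H P₀^⊥‖ > 0). -/

import Mathlib

open Real ContinuousLinearMap

/-- `P` is an orthogonal projection: self-adjoint and idempotent. -/
def IsOrthogonalProjection {E : Type*} [NormedAddCommGroup E] [InnerProductSpace ℂ E]
    [CompleteSpace E] (P : E →L[ℂ] E) : Prop :=
  IsSelfAdjoint P ∧ P ∘L P = P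

/-!
Write `U(T) = exp(-iTH)`, `Q = P₀` and `V = ‖Q H (1 - Q)‖`. For a unit vector `x` with `Q x = 0`,
the function `u(s) = ‖Q U(s) x‖²` starts at `0` and, because the diagonal block `Q H Q`
contributes nothing to its derivative, satisfies `u' ≤ 2 V √u √(1 - u)`. Comparing with the
barrier `sin²(V s)` gives `‖Q U(T) (1 - Q)‖ ≤ sin (V T)` while `V T < π/2`, and likewise for the
other off-diagonal block, since `‖(1 - Q) H Q‖ = V`. The two blocks of `Q U - U Q` map into
orthogonal subspaces, so `‖P₀ - P(T)‖ = ‖Q U - U Q‖ ≤ sin (V T)`. If `V T < θ`, this contradicts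
`‖P₀ - P(T)‖ ≥ sin θ`; hence `θ ≤ V T`.
-/

open Filter Topology NormedSpace RCLike
open scoped InnerProductSpace

lemma le_mul_sin_sq_of_deriv_le_of_lt {u u' : ℝ → ℝ} {r V κ δ T : ℝ} (hr : 0 < r)
    (hV : 0 ≤ V) (hu : ∀ s, HasDerivAt u (u' s) s) (hu0 : u 0 = 0)
    (hu' : ∀ s, u' s ≤ 2 * V * (√(u s) * √(r ^ 2 - u s))) (hκ : V < κ) (hδ : 0 < δ)
    (hT : 0 ≤ T) (hπ : κ * T + δ ≤ π / 2) :
    u T ≤ (r * sin (κ * T + δ)) ^ 2 := by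
  have hB : ∀ s, HasDerivAt (fun s => (r * sin (κ * s + δ)) ^ 2)
      (2 * κ * ((r * sin (κ * s + δ)) * (r * cos (κ * s + δ)))) s := fun s =>
    (((((hasDerivAt_id' s).const_mul κ).add_const δ).sin.const_mul r).fun_pow 2).congr_deriv
      (by simp only [Nat.cast_ofNat]; ring)
  -- `δ > 0` keeps the barrier strictly above `u` at `s = 0`, and `κ > V` makes the comparison
  -- of derivatives strict at a contact point.
  refine image_le_of_deriv_right_lt_deriv_boundary
    (fun s _ => (hu s).continuousAt.continuousWithinAt) (fun s _ => (hu s).hasDerivWithinAt)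
    (by rw [hu0]; positivity) hB ?_ ⟨hT, le_rfl⟩
  rintro s ⟨hs0, hsT⟩ hus
  have hα0 : 0 < κ * s + δ := by nlinarith
  have hαπ : κ * s + δ < π / 2 := by nlinarith
  have hsin : 0 < sin (κ * s + δ) := sin_pos_of_pos_of_lt_pi hα0 (by linarith [pi_pos])
  have hcos : 0 < cos (κ * s + δ) := cos_pos_of_mem_Ioo ⟨by linarith, hαπ⟩
  have hsqrt_u : √(u s) = r * sin (κ * s + δ) := by
    rw [hus, sqrt_sq (by positivity)]
  have hsqrt_compl : √(r ^ 2 - u s) = r * cos (κ * s + δ) := by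
    rw [hus, ← sqrt_sq (by positivity : 0 ≤ r * cos (κ * s + δ)), mul_pow, mul_pow, cos_sq']
    ring_nf
  calc u' s ≤ 2 * V * (√(u s) * √(r ^ 2 - u s)) := hu' s
    _ < 2 * κ * ((r * sin (κ * s + δ)) * (r * cos (κ * s + δ))) := by
      rw [hsqrt_u, hsqrt_compl]
      gcongr

lemma le_mul_sin_sq_of_deriv_le {u u' : ℝ → ℝ} {r V T : ℝ} (hr : 0 < r) (hV : 0 ≤ V)
    (hu : ∀ s, HasDerivAt u (u' s) s) (hu0 : u 0 = 0)
    (hu' : ∀ s, u' s ≤ 2 * V * (√(u s) * √(r ^ 2 - u s))) (hT : 0 ≤ T) (hVT : V * T < π / 2) :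
    u T ≤ (r * sin (V * T)) ^ 2 := by
  have hcont : Continuous fun ε : ℝ => (V + ε) * T + ε := by fun_prop
  have hlim : Tendsto (fun ε : ℝ => (r * sin ((V + ε) * T + ε)) ^ 2) (𝓝[>] 0)
      (𝓝 ((r * sin (V * T)) ^ 2)) := by
    have h : Continuous fun ε : ℝ => (r * sin ((V + ε) * T + ε)) ^ 2 := by fun_prop
    simpa using (h.tendsto 0).mono_left nhdsWithin_le_nhds
  have hsmall : ∀ᶠ ε in 𝓝[>] (0 : ℝ), (V + ε) * T + ε ≤ π / 2 :=
    nhdsWithin_le_nhds <| hcont.tendsto 0 |>.eventually (eventually_le_nhds (by simpa using hVT))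
  refine ge_of_tendsto hlim ?_
  filter_upwards [hsmall, self_mem_nhdsWithin] with ε hε (hε0 : 0 < ε)
  exact le_mul_sin_sq_of_deriv_le_of_lt hr hV hu hu0 hu' (by linarith) hε0 hT hε

section

variable {E : Type*} [NormedAddCommGroup E] [InnerProductSpace ℂ E]

lemma HasDerivAt.norm_sq_complex {f : ℝ → E} {f' : E} {s : ℝ} (hf : HasDerivAt f f' s) :
    HasDerivAt (fun t => ‖f t‖ ^ 2) (2 * re ⟪f s, f'⟫_ℂ) s := by
  let := InnerProductSpace.complexToReal (G := E)
  simpa only [real_inner_eq_re_inner] using hf.norm_sq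

variable [CompleteSpace E] {Q K : E →L[ℂ] E}

namespace IsStarProjection

lemma inner_apply_one_sub_apply (hQ : IsStarProjection Q) (x y : E) :
    ⟪Q x, (1 - Q) y⟫_ℂ = 0 := by
  rw [← adjoint_inner_right, ← star_eq_adjoint, hQ.isSelfAdjoint.star_eq,
    ← mul_apply_eq_comp, hQ.mul_one_sub_self, zero_apply, inner_zero_right]

lemma norm_sq_apply_add_norm_sq_one_sub_apply (hQ : IsStarProjection Q) (x : E) :
    ‖Q x‖ ^ 2 + ‖(1 - Q) x‖ ^ 2 = ‖x‖ ^ 2 := by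
  have h := norm_add_sq_eq_norm_sq_add_norm_sq_of_inner_eq_zero _ _
    (hQ.inner_apply_one_sub_apply x x)
  rw [← add_apply, add_sub_cancel, one_apply_eq_self] at h
  rw [sq, sq, sq, h]

lemma norm_mul_sub_mul_le (hQ : IsStarProjection Q) {A : E →L[ℂ] E} {c : ℝ}
    (h₁ : ‖Q * A * (1 - Q)‖ ≤ c) (h₂ : ‖(1 - Q) * A * Q‖ ≤ c) : ‖Q * A - A * Q‖ ≤ c := by
  have hc : 0 ≤ c := (norm_nonneg _).trans h₁
  refine opNorm_le_bound _ hc fun x => ?_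
  have hsplit : (Q * A - A * Q) x = Q (A ((1 - Q) x)) + (1 - Q) (-A (Q x)) := by
    simp only [sub_apply, mul_apply_eq_comp, one_apply_eq_self, map_sub, map_neg]
    abel
  have hb₁ : ‖Q (A ((1 - Q) x))‖ ≤ c * ‖(1 - Q) x‖ := by
    have : Q (A ((1 - Q) x)) = (Q * A * (1 - Q)) ((1 - Q) x) := by
      simp only [mul_apply_eq_comp, ← mul_apply_eq_comp (1 - Q), hQ.one_sub.isIdempotentElem.eq]
    rw [this]
    exact (le_opNorm _ _).trans (by gcongr)
  have hb₂ : ‖(1 - Q) (-A (Q x))‖ ≤ c * ‖Q x‖ := by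
    have : (1 - Q) (-A (Q x)) = -((1 - Q) * A * Q) (Q x) := by
      simp only [map_neg, mul_apply_eq_comp, ← mul_apply_eq_comp Q Q, hQ.isIdempotentElem.eq]
    rw [this, norm_neg]
    exact (le_opNorm _ _).trans (by gcongr)
  have hpyth := norm_add_sq_eq_norm_sq_add_norm_sq_of_inner_eq_zero _ _
    (hQ.inner_apply_one_sub_apply (A ((1 - Q) x)) (-A (Q x)))
  rw [hsplit]
  refine (pow_le_pow_iff_left₀ (norm_nonneg _) (by positivity) two_ne_zero).mp ?_
  calc _ = ‖Q (A ((1 - Q) x))‖ ^ 2 + ‖(1 - Q) (-A (Q x))‖ ^ 2 := by rw [sq, sq, sq, hpyth]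
    _ ≤ (c * ‖(1 - Q) x‖) ^ 2 + (c * ‖Q x‖) ^ 2 := by gcongr
    _ = (c * ‖x‖) ^ 2 := by
      rw [mul_pow c ‖x‖, ← hQ.norm_sq_apply_add_norm_sq_one_sub_apply x]
      ring

lemma norm_one_sub_mul_mul_of_mem_skewAdjoint (hQ : IsStarProjection Q)
    (hK : K ∈ skewAdjoint (E →L[ℂ] E)) : ‖(1 - Q) * K * Q‖ = ‖Q * K * (1 - Q)‖ := by
  rw [← norm_star (Q * K * (1 - Q)), star_mul, star_mul, hQ.isSelfAdjoint.star_eq,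
    hQ.one_sub.isSelfAdjoint.star_eq, skewAdjoint.mem_iff.mp hK, neg_mul, mul_neg, norm_neg,
    mul_assoc]

end IsStarProjection

lemma re_inner_self_apply_eq_zero_of_mem_skewAdjoint (hK : K ∈ skewAdjoint (E →L[ℂ] E))
    (z : E) : re ⟪z, K z⟫_ℂ = 0 := by
  have h : ⟪K z, z⟫_ℂ = -⟪z, K z⟫_ℂ := by
    rw [← adjoint_inner_right, ← star_eq_adjoint, skewAdjoint.mem_iff.mp hK, neg_apply,
      inner_neg_right]
  have h' := congrArg re h
  rw [← inner_conj_symm, conj_re, map_neg] at h'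
  linarith

lemma re_inner_apply_apply_le_of_mem_skewAdjoint (hQ : IsStarProjection Q)
    (hK : K ∈ skewAdjoint (E →L[ℂ] E)) (y : E) :
    re ⟪Q y, Q (K y)⟫_ℂ ≤ ‖Q * K * (1 - Q)‖ * (‖Q y‖ * ‖(1 - Q) y‖) := by
  have hsplit : Q (K y) = Q (K (Q y)) + (Q * K * (1 - Q)) ((1 - Q) y) := by
    have h1 : (1 - Q) ((1 - Q) y) = (1 - Q) y := by
      rw [← mul_apply_eq_comp, hQ.one_sub.isIdempotentElem.eq]
    simp only [mul_apply_eq_comp, h1, ← map_add]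
    simp
  have hdiag : re ⟪Q y, Q (K (Q y))⟫_ℂ = 0 := by
    rw [← adjoint_inner_left Q, ← star_eq_adjoint, hQ.isSelfAdjoint.star_eq,
      ← mul_apply_eq_comp Q Q, hQ.isIdempotentElem.eq,
      re_inner_self_apply_eq_zero_of_mem_skewAdjoint hK]
  calc re ⟪Q y, Q (K y)⟫_ℂ = re ⟪Q y, (Q * K * (1 - Q)) ((1 - Q) y)⟫_ℂ := by
        rw [hsplit, inner_add_right, map_add, hdiag, zero_add]
    _ ≤ ‖Q y‖ * ‖(Q * K * (1 - Q)) ((1 - Q) y)‖ := re_inner_le_norm _ _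
    _ ≤ ‖Q y‖ * (‖Q * K * (1 - Q)‖ * ‖(1 - Q) y‖) := by gcongr; exact le_opNorm _ _
    _ = _ := by ring

lemma norm_exp_smul_apply_of_mem_skewAdjoint (hK : K ∈ skewAdjoint (E →L[ℂ] E)) (t : ℝ)
    (x : E) : ‖exp (t • K) x‖ = ‖x‖ := by
  let +nondep : NormedAlgebra ℚ (E →L[ℂ] E) := .restrictScalars ℚ ℂ _
  have htK : t • K ∈ skewAdjoint (E →L[ℂ] E) := skewAdjoint.smul_mem t hK
  have hU := exp_mem_unitary_of_mem_skewAdjoint htK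
  exact norm_map_of_mem_unitary hU x

lemma hasDerivAt_exp_smul_apply (K : E →L[ℂ] E) (x : E) (s : ℝ) :
    HasDerivAt (fun t : ℝ => exp (t • K) x) (K (exp (s • K) x)) s := by
  simpa [Function.comp_def] using
    ((apply ℂ E x).restrictScalars ℝ).hasFDerivAt.comp_hasDerivAt s (hasDerivAt_exp_smul_const' K s)

lemma norm_apply_exp_smul_apply_le (hQ : IsStarProjection Q) (hK : K ∈ skewAdjoint (E →L[ℂ] E))
    {x : E} (hx : Q x = 0) {T : ℝ} (hT : 0 ≤ T) (hVT : ‖Q * K * (1 - Q)‖ * T < π / 2) :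
    ‖Q (exp (T • K) x)‖ ≤ sin (‖Q * K * (1 - Q)‖ * T) * ‖x‖ := by
  set V := ‖Q * K * (1 - Q)‖
  have hsin : 0 ≤ sin (V * T) :=
    sin_nonneg_of_nonneg_of_le_pi (by positivity) (by linarith [pi_pos])
  rcases eq_or_ne x 0 with rfl | hx0
  · simp
  set ψ : ℝ → E := fun t => exp (t • K) x
  have hQψ : ∀ s, HasDerivAt (fun t => Q (ψ t)) (Q (K (ψ s))) s := fun s =>
    (Q.restrictScalars ℝ).hasFDerivAt.comp_hasDerivAt s (hasDerivAt_exp_smul_apply K x s)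
  have hu' : ∀ s, 2 * re ⟪Q (ψ s), Q (K (ψ s))⟫_ℂ ≤
      2 * V * (√(‖Q (ψ s)‖ ^ 2) * √(‖x‖ ^ 2 - ‖Q (ψ s)‖ ^ 2)) := fun s => by
    rw [← norm_exp_smul_apply_of_mem_skewAdjoint hK s x,
      ← hQ.norm_sq_apply_add_norm_sq_one_sub_apply (exp (s • K) x), add_sub_cancel_left,
      sqrt_sq (norm_nonneg _), sqrt_sq (norm_nonneg _), mul_assoc]
    gcongr
    exact re_inner_apply_apply_le_of_mem_skewAdjoint hQ hK _
  have hbound := le_mul_sin_sq_of_deriv_le (norm_pos_iff.mpr hx0) (norm_nonneg _)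
    (fun s => (hQψ s).norm_sq_complex) (by simp [ψ, hx]) hu' hT hVT
  rw [mul_comm]
  exact (pow_le_pow_iff_left₀ (norm_nonneg _) (by positivity) two_ne_zero).mp hbound

lemma norm_mul_exp_smul_mul_one_sub_le (hQ : IsStarProjection Q)
    (hK : K ∈ skewAdjoint (E →L[ℂ] E)) {T : ℝ} (hT : 0 ≤ T)
    (hVT : ‖Q * K * (1 - Q)‖ * T < π / 2) :
    ‖Q * exp (T • K) * (1 - Q)‖ ≤ sin (‖Q * K * (1 - Q)‖ * T) := by
  have hsin : 0 ≤ sin (‖Q * K * (1 - Q)‖ * T) :=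
    sin_nonneg_of_nonneg_of_le_pi (by positivity) (by linarith [pi_pos])
  refine opNorm_le_bound _ hsin fun x => ?_
  have hx : Q ((1 - Q) x) = 0 := by
    rw [← mul_apply_eq_comp, hQ.mul_one_sub_self, zero_apply]
  have hnorm : ‖(1 - Q) x‖ ≤ ‖x‖ :=
    (le_opNorm _ _).trans (mul_le_of_le_one_left (norm_nonneg _) (hQ.one_sub.norm_le _))
  calc ‖(Q * exp (T • K) * (1 - Q)) x‖ = ‖Q (exp (T • K) ((1 - Q) x))‖ := rfl
    _ ≤ sin (‖Q * K * (1 - Q)‖ * T) * ‖(1 - Q) x‖ :=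
      norm_apply_exp_smul_apply_le hQ hK hx hT hVT
    _ ≤ sin (‖Q * K * (1 - Q)‖ * T) * ‖x‖ := by gcongr

lemma norm_sub_exp_smul_mul_mul_star_le (hQ : IsStarProjection Q)
    (hK : K ∈ skewAdjoint (E →L[ℂ] E)) {T : ℝ} (hT : 0 ≤ T)
    (hVT : ‖Q * K * (1 - Q)‖ * T < π / 2) :
    ‖Q - exp (T • K) * Q * star (exp (T • K))‖ ≤ sin (‖Q * K * (1 - Q)‖ * T) := by
  let +nondep : NormedAlgebra ℚ (E →L[ℂ] E) := .restrictScalars ℚ ℂ _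
  have hU : exp (T • K) ∈ unitary (E →L[ℂ] E) :=
    exp_mem_unitary_of_mem_skewAdjoint (skewAdjoint.smul_mem T hK)
  have hcomm : (Q - exp (T • K) * Q * star (exp (T • K))) * exp (T • K) =
      Q * exp (T • K) - exp (T • K) * Q := by
    rw [sub_mul, mul_assoc _ (star _), Unitary.star_mul_self_of_mem hU, mul_one]
  rw [← CStarRing.norm_mul_mem_unitary _ hU, hcomm]
  refine hQ.norm_mul_sub_mul_le (norm_mul_exp_smul_mul_one_sub_le hQ hK hT hVT) ?_
  have h := norm_mul_exp_smul_mul_one_sub_le hQ.one_sub hK hT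
  rw [sub_sub_cancel, hQ.norm_one_sub_mul_mul_of_mem_skewAdjoint hK] at h
  exact h hVT

lemma IsSelfAdjoint.exp_smul_comp_comp_exp_smul {H : E →L[ℂ] E} (hH : IsSelfAdjoint H)
    (A : E →L[ℂ] E) (t : ℝ) :
    NormedSpace.exp ((-(Complex.I * t)) • H) ∘L A ∘L NormedSpace.exp ((Complex.I * t) • H) =
      NormedSpace.exp (t • (-Complex.I • H)) * A *
        star (NormedSpace.exp (t • (-Complex.I • H))) := by
  have hsmul : ∀ z : ℂ, (z * t) • H = t • z • H := fun z => by
    rw [mul_comm, mul_smul, Complex.coe_smul]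
  rw [← neg_mul, hsmul, hsmul, star_exp, star_smul, star_smul, hH.star_eq, star_trivial,
    star_neg, Complex.star_def, Complex.conj_I, neg_neg]
  rfl

end

/-- If the maximal angle reaches θ ∈ (0,π/2] at time T_θ ≥ 0, then
‖P₀ H P₀^⊥‖ > 0 and T_θ ≥ θ / ‖P₀ H P₀^⊥‖. -/
theorem time_lower_bound_VHP {E : Type*} [NormedAddCommGroup E]
    [InnerProductSpace ℂ E] [CompleteSpace E]
    (H P₀ : E →L[ℂ] E) (hH : IsSelfAdjoint H) (hP₀ : IsOrthogonalProjection P₀)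
    (P : ℝ → (E →L[ℂ] E))
    (hP : ∀ t : ℝ, P t =
      NormedSpace.exp ((-(Complex.I * t)) • H) ∘L P₀ ∘L NormedSpace.exp ((Complex.I * t) • H))
    (θ Tθ : ℝ) (hθ : θ ∈ Set.Ioc 0 (Real.pi / 2)) (hT : 0 ≤ Tθ)
    (hangle : Real.arcsin ‖P₀ - P Tθ‖ = θ) :
    0 < ‖P₀ ∘L H ∘L (1 - P₀)‖ ∧ Tθ ≥ θ / ‖P₀ ∘L H ∘L (1 - P₀)‖ := by
  obtain ⟨hθ0, hθπ⟩ := hθ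
  have hQ : IsStarProjection P₀ := ⟨hP₀.2, hP₀.1⟩
  have hK : -Complex.I • H ∈ skewAdjoint (E →L[ℂ] E) :=
    hH.smul_mem_skewAdjoint (by simp [skewAdjoint.mem_iff])
  have hV : ‖P₀ * (-Complex.I • H) * (1 - P₀)‖ = ‖P₀ ∘L H ∘L (1 - P₀)‖ := by
    rw [mul_smul_comm, smul_mul_assoc, norm_smul, norm_neg, Complex.norm_I, one_mul, mul_assoc]
    rfl
  have hPT : P Tθ = exp (Tθ • (-Complex.I • H)) * P₀ * star (exp (Tθ • (-Complex.I • H))) :=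
    (hP Tθ).trans (hH.exp_smul_comp_comp_exp_smul P₀ Tθ)
  have hsin : sin θ ≤ ‖P₀ - P Tθ‖ :=
    (le_arcsin_iff_sin_le' ⟨by linarith [pi_pos], hθπ⟩).mp hangle.ge
  set V := ‖P₀ ∘L H ∘L (1 - P₀)‖
  have hθV : θ ≤ V * Tθ := by
    by_contra! h
    have hle := norm_sub_exp_smul_mul_mul_star_le hQ hK hT (by rw [hV]; linarith)
    rw [hV, ← hPT] at hle
    have hVT_ge : -(π / 2) ≤ V * Tθ := by
      linarith [pi_pos, mul_nonneg (norm_nonneg (P₀ ∘L H ∘L (1 - P₀))) hT]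
    linarith [sin_lt_sin_of_lt_of_le_pi_div_two hVT_ge hθπ h]
  have hVpos : 0 < V := pos_of_mul_pos_left (hθ0.trans_le hθV) hT
  exact ⟨hVpos, by rw [ge_iff_le, div_le_iff₀ hVpos]; linarith⟩
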